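/- Let B : (ℝ³ ⊗ ℝ⁴) × (ℝ³ ⊗ ℝ⁴) → ℝ³ ⊗ ℝ⁵ be an ℝ-bilinear alternating map that is 𝔰𝔬(1,2)-equivariant, i.e. B((Xx) ⊗ v, y ⊗ w) + B(x ⊗ v, (Xy) ⊗ w) = (X ⊗ id_{ℝ⁵})(B(x ⊗ v, y ⊗ w)) for all X ∈ 𝔰𝔬(1,2), x, y ∈ ℝ³, v, w ∈ ℝ⁴. Then there exists a unique symmetric bilinear map β : ℝ⁴ × ℝ⁴ → ℝ⁵ such that B(x ⊗ v, y ⊗ w) = K(x, y) ⊗ β(v, w) for all x, y ∈ ℝ³ and v, w ∈ ℝ⁴. -/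

import Mathlib

/-!
For fixed `v, w` the map `(x, y) ↦ B(x ⊗ v, y ⊗ w)` is an `𝔰𝔬(1,2)`-equivariant bilinear map
`ℝ³ × ℝ³ → ℝ³ ⊗ ℝ⁵`. As `ℝ³ ⊗ ℝ³ ≅ ℝ ⊕ ℝ³ ⊕ S²₀ℝ³` contains the standard representation
exactly once, through `K`, every such map is `K(x, y) ⊗ c` for a single vector `c`. Pairing with
linear functionals reduces this to real-valued maps, where it is a linear system on the 27
structure constants `g(eᵢ, eⱼ)ₗ`. Reading `c` off a fixed coordinate makes it bilinear in `(v, w)`,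
and the alternation of `B` together with `K(y, x) = -K(x, y)` makes it symmetric.
-/

open Matrix TensorProduct

noncomputable section

def eta3 : Matrix (Fin 3) (Fin 3) ℝ := Matrix.diagonal ![-1, 1, 1]

/-- The Lie algebra 𝔰𝔬(1,2) = {X : Xᵀ η₃ + η₃ X = 0}, as a set. -/
def so12Set : Set (Matrix (Fin 3) (Fin 3) ℝ) :=
  {X | Xᵀ * eta3 + eta3 * X = 0}

/-- The Minkowski cross product K on ℝ^{1,2}, characterized by ⟨K(x,y),z⟩ = det(x|y|z). -/
def K (x y : Fin 3 → ℝ) : Fin 3 → ℝ :=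
  ![-(x 1 * y 2 - x 2 * y 1), x 2 * y 0 - x 0 * y 2, x 0 * y 1 - x 1 * y 0]

abbrev T34 := TensorProduct ℝ (Fin 3 → ℝ) (Fin 4 → ℝ)

abbrev T35 := TensorProduct ℝ (Fin 3 → ℝ) (Fin 5 → ℝ)

section piScalarLeft

variable (R ι W : Type*) [CommSemiring R] [Fintype ι] [DecidableEq ι]
  [AddCommMonoid W] [Module R W]

def piScalarLeft : (ι → R) ⊗[R] W ≃ₗ[R] (ι → W) :=
  TensorProduct.comm R _ _ ≪≫ₗ piScalarRight R R W ι

variable {R ι W}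

@[simp] lemma piScalarLeft_tmul (x : ι → R) (w : W) :
    piScalarLeft R ι W (x ⊗ₜ w) = fun j => x j • w := by
  simp [piScalarLeft]

lemma piScalarLeft_map_mulVecLin (X : Matrix ι ι R) (t : (ι → R) ⊗[R] W) :
    piScalarLeft R ι W (TensorProduct.map X.mulVecLin LinearMap.id t) =
      fun l => ∑ a, X l a • piScalarLeft R ι W t a := by
  induction t using TensorProduct.induction_on with
  | zero => ext; simp
  | tmul x w => ext l; simp [Matrix.mulVec, dotProduct, Finset.sum_smul, smul_smul]
  | add t t' ht ht' =>
    ext l; simp only [map_add, ht, ht', Pi.add_apply, smul_add, Finset.sum_add_distrib]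

end piScalarLeft

lemma coeff_sum_eq_of_equivariant {n R : Type*} [Fintype n] [DecidableEq n] [CommSemiring R]
    (g : (n → R) →ₗ[R] (n → R) →ₗ[R] (n → R)) (X : Matrix n n R)
    (hX : ∀ x y, g (X *ᵥ x) y + g x (X *ᵥ y) = X *ᵥ g x y) (i j l : n) :
    ∑ a, X a i * g (Pi.single a 1) (Pi.single j 1) l +
      ∑ a, X a j * g (Pi.single i 1) (Pi.single a 1) l =
      ∑ a, X l a * g (Pi.single i 1) (Pi.single j 1) a := by
  have hcol : ∀ k, X *ᵥ Pi.single k 1 = ∑ a, X a k • Pi.single a 1 := by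
    intro k
    ext m
    simp [Finset.sum_apply, Pi.single_apply]
  simpa [hcol, map_sum, Matrix.mulVec, dotProduct, Finset.sum_apply] using
    congrFun (hX (Pi.single i 1) (Pi.single j 1)) l

def boost₀₁ : Matrix (Fin 3) (Fin 3) ℝ := !![0, 1, 0; 1, 0, 0; 0, 0, 0]

def boost₀₂ : Matrix (Fin 3) (Fin 3) ℝ := !![0, 0, 1; 0, 0, 0; 1, 0, 0]

def rotation₁₂ : Matrix (Fin 3) (Fin 3) ℝ := !![0, 0, 0; 0, 0, -1; 0, 1, 0]

lemma boost₀₁_mem_so12Set : boost₀₁ ∈ so12Set := by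
  ext i j
  fin_cases i <;> fin_cases j <;> simp [boost₀₁, eta3, Matrix.mul_apply, Fin.sum_univ_three]

lemma boost₀₂_mem_so12Set : boost₀₂ ∈ so12Set := by
  ext i j
  fin_cases i <;> fin_cases j <;> simp [boost₀₂, eta3, Matrix.mul_apply, Fin.sum_univ_three]

lemma rotation₁₂_mem_so12Set : rotation₁₂ ∈ so12Set := by
  ext i j
  fin_cases i <;> fin_cases j <;> simp [rotation₁₂, eta3, Matrix.mul_apply, Fin.sum_univ_three]

def minkowskiCross : (Fin 3 → ℝ) →ₗ[ℝ] (Fin 3 → ℝ) →ₗ[ℝ] (Fin 3 → ℝ) :=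
  crossProduct.compr₂ eta3.mulVecLin

@[simp] lemma minkowskiCross_apply (x y : Fin 3 → ℝ) : minkowskiCross x y = K x y := by
  ext i
  fin_cases i <;> simp [minkowskiCross, K, eta3, cross_apply, mulVec_diagonal]

lemma K_anticomm (x y : Fin 3 → ℝ) : K y x = -K x y := by
  ext i
  fin_cases i <;> simp [K] <;> ring

lemma K_single_zero_single_one : K (Pi.single 0 1) (Pi.single 1 1) = Pi.single 2 1 := by
  ext i
  fin_cases i <;> simp [K]

set_option maxHeartbeats 1000000 in
theorem eq_smul_minkowskiCross_of_equivariant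
    (g : (Fin 3 → ℝ) →ₗ[ℝ] (Fin 3 → ℝ) →ₗ[ℝ] (Fin 3 → ℝ))
    (hg : ∀ X ∈ so12Set, ∀ x y, g (X *ᵥ x) y + g x (X *ᵥ y) = X *ᵥ g x y) :
    g = g (Pi.single 0 1) (Pi.single 1 1) 2 • minkowskiCross := by
  have h₀₁ := coeff_sum_eq_of_equivariant g _ (hg _ boost₀₁_mem_so12Set)
  have h₀₂ := coeff_sum_eq_of_equivariant g _ (hg _ boost₀₂_mem_so12Set)
  have h₁₂ := coeff_sum_eq_of_equivariant g _ (hg _ rotation₁₂_mem_so12Set)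
  simp [Fin.forall_fin_succ, Fin.sum_univ_three, boost₀₁, boost₀₂, rotation₁₂] at h₀₁ h₀₂ h₁₂
  casesm* _ ∧ _
  refine LinearMap.ext_basis (Pi.basisFun ℝ _) (Pi.basisFun ℝ _) fun i j => funext fun l => ?_
  -- each of the 27 structure constants is forced by the 81 linear equations now in context
  fin_cases i <;> fin_cases j <;> fin_cases l <;> simp [K] <;> linarith

theorem eq_K_tmul_of_equivariant {W : Type*} [AddCommGroup W] [Module ℝ W]
    (b : (Fin 3 → ℝ) →ₗ[ℝ] (Fin 3 → ℝ) →ₗ[ℝ] (Fin 3 → ℝ) ⊗[ℝ] W)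
    (hb : ∀ X ∈ so12Set, ∀ x y,
      b (X *ᵥ x) y + b x (X *ᵥ y) = TensorProduct.map X.mulVecLin LinearMap.id (b x y))
    (x y : Fin 3 → ℝ) :
    b x y = K x y ⊗ₜ piScalarLeft ℝ (Fin 3) W (b (Pi.single 0 1) (Pi.single 1 1)) 2 := by
  apply (piScalarLeft ℝ (Fin 3) W).injective
  ext l
  rw [piScalarLeft_tmul, ← sub_eq_zero, ← Module.forall_dual_apply_eq_zero_iff ℝ]
  intro φ
  let g := b.compr₂ (φ.compLeft (Fin 3) ∘ₗ (piScalarLeft ℝ (Fin 3) W).toLinearMap)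
  have hg : ∀ X ∈ so12Set, ∀ x y, g (X *ᵥ x) y + g x (X *ᵥ y) = X *ᵥ g x y := by
    intro X hX x y
    ext m
    simpa [g, piScalarLeft_map_mulVecLin, Matrix.mulVec, dotProduct] using
      congrArg (fun t => φ (piScalarLeft ℝ (Fin 3) W t m)) (hb X hX x y)
  simpa [g, sub_eq_zero, mul_comm] using
    congrFun (LinearMap.congr_fun₂ (eq_smul_minkowskiCross_of_equivariant g hg) x y) l

lemma eq_of_K_single_tmul_eq {W : Type*} [AddCommMonoid W] [Module ℝ W] {q q' : W}
    (h : K (Pi.single 0 1) (Pi.single 1 1) ⊗ₜ[ℝ] q = K (Pi.single 0 1) (Pi.single 1 1) ⊗ₜ[ℝ] q') :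
    q = q' := by
  simpa [K_single_zero_single_one] using congrFun (congrArg (piScalarLeft ℝ (Fin 3) W) h) 2

theorem equivariant_alternating_bilinear_form_of_cross_product
    (B : T34 →ₗ[ℝ] T34 →ₗ[ℝ] T35)
    (halt : ∀ u : T34, B u u = 0)
    (hequiv : ∀ X ∈ so12Set, ∀ (x y : Fin 3 → ℝ) (v w : Fin 4 → ℝ),
      B ((X.mulVec x) ⊗ₜ[ℝ] v) (y ⊗ₜ[ℝ] w) + B (x ⊗ₜ[ℝ] v) ((X.mulVec y) ⊗ₜ[ℝ] w) =
        TensorProduct.map X.mulVecLin LinearMap.id (B (x ⊗ₜ[ℝ] v) (y ⊗ₜ[ℝ] w))) :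
    ∃! β : (Fin 4 → ℝ) →ₗ[ℝ] (Fin 4 → ℝ) →ₗ[ℝ] (Fin 5 → ℝ),
      (∀ v w : Fin 4 → ℝ, β v w = β w v) ∧
      ∀ (x y : Fin 3 → ℝ) (v w : Fin 4 → ℝ),
        B (x ⊗ₜ[ℝ] v) (y ⊗ₜ[ℝ] w) = K x y ⊗ₜ[ℝ] β v w := by
  let β := (B.compl₁₂ (TensorProduct.mk ℝ _ _ (Pi.single 0 1))
    (TensorProduct.mk ℝ _ _ (Pi.single 1 1))).compr₂
      (LinearMap.proj 2 ∘ₗ (piScalarLeft ℝ (Fin 3) (Fin 5 → ℝ)).toLinearMap)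
  have hB : ∀ x y v w, B (x ⊗ₜ[ℝ] v) (y ⊗ₜ[ℝ] w) = K x y ⊗ₜ[ℝ] β v w := fun x y v w =>
    eq_K_tmul_of_equivariant (B.compl₁₂ ((TensorProduct.mk ℝ _ _).flip v)
      ((TensorProduct.mk ℝ _ _).flip w)) (fun X hX x y => hequiv X hX x y v w) x y
  refine ⟨β, ⟨fun v w => eq_of_K_single_tmul_eq ?_, hB⟩, fun β' ⟨_, hβ'⟩ => ?_⟩
  · rw [← hB, ← LinearMap.IsAlt.neg halt, hB, K_anticomm, neg_tmul, neg_neg]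
  · exact LinearMap.ext₂ fun v w =>
      eq_of_K_single_tmul_eq ((hβ' _ _ v w).symm.trans (hB _ _ v w))
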